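/- arXiv:2304.08819 — 5 statements merged into one kernel-verified Lean document; each statement's English description precedes it below -/
import Mathlib

section
/- Assume (1+θ)·∫_{(0,∞)} z dμ_F̂(z) < ∞. Then for every admissible indemnity I ∈ 𝒜, the extended distortion premium c(I) := (1+θ₀)·∫₀^∞ g( μ_F({x ∈ [0,∞) : I(x) > t}) ) dt satisfies c(I) = (1+θ)·∫_{(0,∞)} I(z) dμ_F̂(z) < ∞. -/
open MeasureTheory Set Filter Topology
open scoped ENNReal

noncomputable section

/-- The admissible set 𝒜: functions `H : [0,∞) → [0,∞)` with `H 0 = 0` that are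
nondecreasing and 1-Lipschitz (extended to `ℝ`, with the conditions imposed on `[0,∞)`). -/
def Adm : Set (ℝ → ℝ) :=
  {H | H 0 = 0 ∧ (∀ z, 0 ≤ z → 0 ≤ H z) ∧ MonotoneOn H (Set.Ici 0) ∧
    LipschitzOnWith 1 H (Set.Ici 0)}

/-- The objective functional
`J_a(H) = ∫_{(0,∞)} ((a/2)·H² + H) dμ_F − (1+θ)·∫_{(0,∞)} H dμ_F̂`, valued in `EReal`. -/
def Jfun (μF μFhat : Measure ℝ) (θ a : ℝ) (H : ℝ → ℝ) : EReal :=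
  ((∫⁻ z in Set.Ioi (0:ℝ), ENNReal.ofReal (a / 2 * H z ^ 2 + H z) ∂μF : ℝ≥0∞) : EReal)
    - ((ENNReal.ofReal (1 + θ) * ∫⁻ z in Set.Ioi (0:ℝ), ENNReal.ofReal (H z) ∂μFhat : ℝ≥0∞) : EReal)

/-- `v(a) = inf_{H ∈ 𝒜} J_a(H)`. -/
def vfun (μF μFhat : Measure ℝ) (θ : ℝ) (a : ℝ) : EReal :=
  ⨅ H ∈ Adm, Jfun μF μFhat θ a H

/-! For `t > 0` the superlevel set `{x ≥ 0 | t < I x}` of an admissible indemnity is empty or an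
open ray `(a, ∞)`, since `I` is continuous and nondecreasing with `I 0 = 0`. On such a ray
`g (μ_F (a, ∞)) = g (1 - F a) = g (1 - F 0) · μ_F̂ (a, ∞)`, and `(1 + θ₀) g (1 - F 0) = 1 + θ`.
So the premium integrand is `(1 + θ) μ_F̂ {I > t}`, which the layer cake formula integrates to
`(1 + θ) ∫ I dμ_F̂`, finite because `I z ≤ z`. -/

theorem setOf_nonneg_lt_eq_empty_or_Ioi {f : ℝ → ℝ} {t : ℝ} (hmono : MonotoneOn f (Ici 0))
    (hcont : ContinuousOn f (Ici 0)) (ht : f 0 ≤ t) :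
    {x | 0 ≤ x ∧ t < f x} = ∅ ∨ ∃ a, 0 ≤ a ∧ {x | 0 ≤ x ∧ t < f x} = Ioi a := by
  set S := {x | 0 ≤ x ∧ t < f x}
  rcases S.eq_empty_or_nonempty with hS | hS
  · exact Or.inl hS
  have hbdd : BddBelow S := ⟨0, fun x hx => hx.1⟩
  have ha0 : 0 ≤ sInf S := le_csInf hS fun x hx => hx.1
  refine Or.inr ⟨sInf S, ha0, Subset.antisymm (fun x hx => ?_) fun x hx => ?_⟩
  · refine lt_of_le_of_ne (csInf_le hbdd hx) fun hax => ?_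
    subst hax
    have hpos : 0 < sInf S := ha0.lt_of_ne fun h0 => by
      rw [← h0] at hx; exact absurd hx.2 ht.not_gt
    -- `f > t` persists slightly to the left of the infimum, inside `[0, ∞)`
    have hcontAt : ContinuousAt f (sInf S) := hcont.continuousAt (Ici_mem_nhds hpos)
    have hev : ∀ᶠ y in 𝓝[<] sInf S, t < f y ∧ 0 < y :=
      nhdsWithin_le_nhds ((hcontAt.eventually (lt_mem_nhds hx.2)).and (lt_mem_nhds hpos))
    obtain ⟨y, ⟨hty, hy0⟩, hya⟩ := (hev.and self_mem_nhdsWithin).exists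
    exact absurd (csInf_le hbdd ⟨hy0.le, hty⟩) (not_le.2 hya)
  · obtain ⟨y, hyS, hyx⟩ := exists_lt_of_csInf_lt hS hx
    exact ⟨hyS.1.trans hyx.le, hyS.2.trans_le (hmono hyS.1 (hyS.1.trans hyx.le) hyx.le)⟩

theorem le_self_of_lipschitzOnWith_one {f : ℝ → ℝ} (hf : LipschitzOnWith 1 f (Ici 0))
    (hf0 : f 0 = 0) {z : ℝ} (hz : 0 ≤ z) : f z ≤ z := by
  have := hf.dist_le_mul z hz 0 self_mem_Ici
  rw [hf0, Real.dist_eq, Real.dist_eq, sub_zero, sub_zero, NNReal.coe_one, one_mul,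
    abs_of_nonneg hz] at this
  exact (le_abs_self _).trans this

theorem setLIntegral_Ioi_ofReal_eq_lintegral_meas_lt (μ : Measure ℝ) {f : ℝ → ℝ}
    (hf0 : f 0 ≤ 0) (hf_nn : ∀ z ∈ Ioi (0 : ℝ), 0 ≤ f z)
    (hf : AEMeasurable f (μ.restrict (Ioi 0))) :
    ∫⁻ z in Ioi (0 : ℝ), ENNReal.ofReal (f z) ∂μ =
      ∫⁻ t in Ioi (0 : ℝ), μ {x | 0 ≤ x ∧ t < f x} := by
  have hf_nn_ae : 0 ≤ᵐ[μ.restrict (Ioi 0)] f :=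
    (ae_restrict_iff' measurableSet_Ioi).2 (ae_of_all _ hf_nn)
  rw [lintegral_eq_lintegral_meas_lt _ hf_nn_ae hf]
  refine setLIntegral_congr_fun measurableSet_Ioi fun t (ht : 0 < t) => ?_
  rw [Measure.restrict_apply' measurableSet_Ioi]
  congr 1
  ext x
  refine ⟨fun ⟨hxt, hx⟩ => ⟨le_of_lt hx, hxt⟩, fun ⟨hx, hxt⟩ => ⟨hxt, ?_⟩⟩
  exact hx.lt_of_ne fun h => by subst h; linarith

theorem ofReal_mul_distortion_measure_Ioi {F Fhat : StieltjesFunction ℝ} {g : ℝ → ℝ} {θ0 θ : ℝ}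
    (hF_top : Tendsto F atTop (𝓝 1)) (hFhat_top : Tendsto Fhat atTop (𝓝 1))
    (hg_pos : 0 < g (1 - F 0)) (hθ0 : -1 < θ0) (hθ : θ = (1 + θ0) * g (1 - F 0) - 1) {a : ℝ}
    (hFhat : Fhat a = 1 - g (1 - F a) / g (1 - F 0)) :
    ENNReal.ofReal (1 + θ0) * ENNReal.ofReal (g (F.measure (Ioi a)).toReal) =
      ENNReal.ofReal (1 + θ) * Fhat.measure (Ioi a) := by
  have hFa : F a ≤ 1 := F.mono.ge_of_tendsto hF_top a
  rw [F.measure_Ioi hF_top, Fhat.measure_Ioi hFhat_top, ENNReal.toReal_ofReal (by linarith), hFhat,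
    ← ENNReal.ofReal_mul (by linarith), ← ENNReal.ofReal_mul (by nlinarith)]
  congr 1
  rw [hθ]
  field_simp
  ring

theorem stmt_1_general
    (F Fhat : StieltjesFunction ℝ) (g : ℝ → ℝ) (θ0 θ : ℝ)
    (hF_top : Tendsto (fun z => F z) atTop (nhds 1))
    (hg_zero : g 0 = 0)
    (hg_pos : 0 < g (1 - F 0))
    (hθ0 : -1 < θ0)
    (hθ : θ = (1 + θ0) * g (1 - F 0) - 1)
    (hFhat : ∀ z : ℝ, Fhat z = if z < 0 then 0 else 1 - g (1 - F z) / g (1 - F 0))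
    (hFhat_top : Tendsto (fun z => Fhat z) atTop (nhds 1))
    (hfin : ENNReal.ofReal (1 + θ) *
        (∫⁻ z in Set.Ioi (0:ℝ), ENNReal.ofReal z ∂Fhat.measure) < ⊤)
    (I : ℝ → ℝ) (hI : I ∈ Adm) :
    ENNReal.ofReal (1 + θ0) *
        (∫⁻ t in Set.Ioi (0:ℝ),
          ENNReal.ofReal (g ((F.measure {x : ℝ | 0 ≤ x ∧ t < I x}).toReal))) =
      ENNReal.ofReal (1 + θ) *
        (∫⁻ z in Set.Ioi (0:ℝ), ENNReal.ofReal (I z) ∂Fhat.measure) ∧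
    ENNReal.ofReal (1 + θ) *
        (∫⁻ z in Set.Ioi (0:ℝ), ENNReal.ofReal (I z) ∂Fhat.measure) < ⊤ := by
  obtain ⟨hI0, hI_nn, hI_mono, hI_lip⟩ := hI
  have hI_cont : ContinuousOn I (Ici 0) := hI_lip.continuousOn
  have hlayer := setLIntegral_Ioi_ofReal_eq_lintegral_meas_lt Fhat.measure hI0.le
    (fun z hz => hI_nn z (le_of_lt hz))
    ((hI_cont.mono Ioi_subset_Ici_self).aemeasurable measurableSet_Ioi)
  have hsuperlevel : ∀ t ∈ Ioi (0 : ℝ),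
      ENNReal.ofReal (1 + θ0) * ENNReal.ofReal (g (F.measure {x | 0 ≤ x ∧ t < I x}).toReal) =
        ENNReal.ofReal (1 + θ) * Fhat.measure {x | 0 ≤ x ∧ t < I x} := by
    intro t (ht : 0 < t)
    rcases setOf_nonneg_lt_eq_empty_or_Ioi hI_mono hI_cont (hI0.trans_le ht.le) with
      h | ⟨a, ha, h⟩
    · simp [h, hg_zero]
    · rw [h]
      refine ofReal_mul_distortion_measure_Ioi hF_top hFhat_top hg_pos hθ0 hθ ?_
      rw [hFhat, if_neg ha.not_gt]
  refine ⟨?_, lt_of_le_of_lt ?_ hfin⟩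
  · rw [hlayer, ← lintegral_const_mul' _ _ ENNReal.ofReal_ne_top,
      ← lintegral_const_mul' _ _ ENNReal.ofReal_ne_top]
    exact setLIntegral_congr_fun measurableSet_Ioi hsuperlevel
  · gcongr 1
    refine setLIntegral_mono' measurableSet_Ioi fun z (hz : 0 < z) => ?_
    exact ENNReal.ofReal_le_ofReal (le_self_of_lipschitzOnWith_one hI_lip hI0 hz.le)

/-- under the finite-moment assumption on μ_F̂, for every admissible
indemnity I ∈ 𝒜, the extended distortion premium satisfies
c(I) = (1+θ)·∫_{(0,∞)} I dμ_F̂ < ∞. -/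
theorem stmt_1
    (F Fhat : StieltjesFunction ℝ) (g : ℝ → ℝ) (θ0 θ : ℝ)
    (hF_neg : ∀ z : ℝ, z < 0 → F z = 0)
    (hF_top : Tendsto (fun z => F z) atTop (nhds 1))
    (hg_mono : MonotoneOn g (Set.Icc 0 1))
    (hg_left : ∀ p ∈ Set.Ioc (0:ℝ) 1, Tendsto g (nhdsWithin p (Set.Iio p)) (nhds (g p)))
    (hg_zero : g 0 = 0)
    (hg_zero' : Tendsto g (nhdsWithin 0 (Set.Ioi 0)) (nhds 0))
    (hg_one : g 1 = 1)
    (hg_pos : 0 < g (1 - F 0))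
    (hθ0 : -1 < θ0)
    (hθ : θ = (1 + θ0) * g (1 - F 0) - 1)
    (hFhat : ∀ z : ℝ, Fhat z = if z < 0 then 0 else 1 - g (1 - F z) / g (1 - F 0))
    (hFhat_top : Tendsto (fun z => Fhat z) atTop (nhds 1))
    (hfin : ENNReal.ofReal (1 + θ) *
        (∫⁻ z in Set.Ioi (0:ℝ), ENNReal.ofReal z ∂Fhat.measure) < ⊤)
    (I : ℝ → ℝ) (hI : I ∈ Adm) :
    ENNReal.ofReal (1 + θ0) *
        (∫⁻ t in Set.Ioi (0:ℝ),
          ENNReal.ofReal (g ((F.measure {x : ℝ | 0 ≤ x ∧ t < I x}).toReal))) =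
      ENNReal.ofReal (1 + θ) *
        (∫⁻ z in Set.Ioi (0:ℝ), ENNReal.ofReal (I z) ∂Fhat.measure) ∧
    ENNReal.ofReal (1 + θ) *
        (∫⁻ z in Set.Ioi (0:ℝ), ENNReal.ofReal (I z) ∂Fhat.measure) < ⊤ :=
  stmt_1_general F Fhat g θ0 θ hF_top hg_zero hg_pos hθ0 hθ hFhat hFhat_top hfin I hI
end
end

section
/- Assume ∫_{(0,∞)} z dμ_F(z) < (1+θ)·∫_{(0,∞)} z dμ_F̂(z) < ∞. Then the function v : (0,∞) → ℝ is bounded, continuous, strictly increasing, and concave on (0,∞). -/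
/-!
For `a > 0`, an admissible `H` has either `J_a(H) = +∞` for every such `a`, or
`J_a(H) = c_H + a m_H` with `m_H = ½ ∫ H² dμ_F ≥ 0` and `c_H ≥ -(1+θ) ∫ z dμ_F̂` (as `H(z) ≤ z`).
So `v` is an infimum of affine functions, bounded below: it is concave, hence continuous, on
`(0, ∞)`. The moment condition gives `c_H < 0` for a truncation `H = min(z, N)`, and scaling
`H` down gives `v < 0`. Since `F(T) = 1` forces `F̂(T) = 1`, a small `∫ H² dμ_F` makes
`∫ H dμ_F̂` small; so the nearly optimal `H` for `v(b) < 0` have slopes bounded below, which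
makes `v` strictly increasing.
-/

open MeasureTheory Set Filter Topology
open scoped ENNReal

noncomputable section

section InfOfAffine

variable {ι : Type*} {s : Set ι} {c m : ι → ℝ} {w : ℝ → ℝ}

theorem concaveOn_of_isGLB_affine
    (hw : ∀ a ∈ Ioi (0 : ℝ), IsGLB ((fun i => c i + a * m i) '' s) (w a)) :
    ConcaveOn ℝ (Ioi 0) w := by
  refine ⟨convex_Ioi 0, fun a ha b hb t u ht hu htu => ?_⟩
  refine (hw _ (convex_Ioi 0 ha hb ht hu htu)).2 ?_
  rintro _ ⟨i, hi, rfl⟩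
  have hia := mul_le_mul_of_nonneg_left ((hw a ha).1 ⟨i, hi, rfl⟩) ht
  have hib := mul_le_mul_of_nonneg_left ((hw b hb).1 ⟨i, hi, rfl⟩) hu
  simp only [smul_eq_mul]
  linear_combination hia + hib + c i * htu

/-- Nearly optimal lines at `b` have intercept below `w b / 2 < 0`, hence slope above `δ`;
at `a < b` they lie lower by `(b - a) δ`. -/
theorem strictMonoOn_of_isGLB_affine
    (hw : ∀ a ∈ Ioi (0 : ℝ), IsGLB ((fun i => c i + a * m i) '' s) (w a))
    (hm : ∀ i ∈ s, 0 ≤ m i) (hsmall : ∀ ε > 0, ∃ δ > 0, ∀ i ∈ s, m i ≤ δ → -ε ≤ c i)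
    (hneg : ∀ b ∈ Ioi (0 : ℝ), w b < 0) :
    StrictMonoOn w (Ioi 0) := by
  intro a ha b hb hab
  have hwb := hneg b hb
  obtain ⟨δ, hδ, hcδ⟩ := hsmall (-w b / 2) (by linarith)
  set κ := min (-w b / 2) ((b - a) * δ / 2)
  have hκ : 0 < κ := lt_min (by linarith) (by have := sub_pos.2 hab; positivity)
  obtain ⟨_, ⟨i, hi, rfl⟩, -, hib⟩ := (hw b hb).exists_between (lt_add_of_pos_right (w b) hκ)
  have hmi : δ < m i := by
    by_contra! h
    have := hcδ i hi h
    nlinarith [hm i hi, min_le_left (-w b / 2) ((b - a) * δ / 2), hb.out]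
  have hia := (hw a ha).1 ⟨i, hi, rfl⟩
  nlinarith [min_le_right (-w b / 2) ((b - a) * δ / 2)]

end InfOfAffine

namespace Adm

variable {H : ℝ → ℝ}

theorem nonneg (hH : H ∈ Adm) {z : ℝ} (hz : 0 ≤ z) : 0 ≤ H z := hH.2.1 z hz

theorem mono (hH : H ∈ Adm) {y z : ℝ} (hy : 0 ≤ y) (hyz : y ≤ z) : H y ≤ H z :=
  hH.2.2.1 hy (hy.trans hyz) hyz

theorem sub_le (hH : H ∈ Adm) {y z : ℝ} (hy : 0 ≤ y) (hyz : y ≤ z) : H z - H y ≤ z - y := by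
  have h := hH.2.2.2.dist_le_mul z (hy.trans hyz) y hy
  rw [Real.dist_eq, Real.dist_eq, NNReal.coe_one, one_mul, abs_of_nonneg (sub_nonneg.2 hyz)] at h
  exact (le_abs_self _).trans h

theorem le_self (hH : H ∈ Adm) {z : ℝ} (hz : 0 ≤ z) : H z ≤ z := by
  simpa [hH.1] using Adm.sub_le hH le_rfl hz

theorem le_add_sub (hH : H ∈ Adm) {T z : ℝ} (hT : 0 ≤ T) (hz : 0 ≤ z) :
    H z ≤ H T + max (z - T) 0 := by
  rcases le_total z T with h | h
  · linarith [mono hH hz h, le_max_right (z - T) 0]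
  · linarith [sub_le hH hT h, le_max_left (z - T) 0]

theorem aemeasurable (hH : H ∈ Adm) (μ : Measure ℝ) : AEMeasurable H (μ.restrict (Ioi 0)) :=
  (hH.2.2.2.continuousOn.mono Ioi_subset_Ici_self).aemeasurable measurableSet_Ioi

theorem min_mem {N : ℝ} (hN : 0 ≤ N) : (fun z => min z N) ∈ Adm :=
  ⟨min_eq_left hN, fun _ hz => le_min hz hN, fun _ _ _ _ h => min_le_min_right N h,
    (LipschitzWith.id.min_const N).lipschitzOnWith⟩

theorem const_mul_mem (hH : H ∈ Adm) {ε : ℝ} (hε : 0 ≤ ε) (hε1 : ε ≤ 1) :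
    (fun z => ε * H z) ∈ Adm := by
  refine ⟨by simp [hH.1], fun z hz => mul_nonneg hε (nonneg hH hz),
    fun y hy z _ h => mul_le_mul_of_nonneg_left (mono hH hy h) hε, ?_⟩
  have hmul : LipschitzWith 1 (fun x : ℝ => ε * x) :=
    (lipschitzWith_smul ε).weaken (by rw [← NNReal.coe_le_coe]; simpa [abs_of_nonneg hε] using hε1)
  simpa only [one_mul, Function.comp_def] using hmul.comp_lipschitzOnWith hH.2.2.2

end Adm

def linPart (μ : Measure ℝ) (H : ℝ → ℝ) : ℝ≥0∞ := ∫⁻ z in Ioi 0, ENNReal.ofReal (H z) ∂μ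

def quadPart (μ : Measure ℝ) (H : ℝ → ℝ) : ℝ≥0∞ := ∫⁻ z in Ioi 0, ENNReal.ofReal (H z ^ 2) ∂μ

section Objective

variable {μ ν : Measure ℝ} {θ a : ℝ} {H : ℝ → ℝ}

theorem Jfun_eq (hH : H ∈ Adm) (ha : 0 ≤ a) :
    Jfun μ ν θ a H = ((linPart μ H + ENNReal.ofReal (a / 2) * quadPart μ H : ℝ≥0∞) : EReal)
      - ((ENNReal.ofReal (1 + θ) * linPart ν H : ℝ≥0∞) : EReal) := by
  have hI : ∫⁻ z in Ioi 0, ENNReal.ofReal (a / 2 * H z ^ 2 + H z) ∂μ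
      = linPart μ H + ENNReal.ofReal (a / 2) * quadPart μ H := by
    rw [linPart, quadPart, ← lintegral_const_mul' _ _ ENNReal.ofReal_ne_top,
      ← lintegral_add_left' (Adm.aemeasurable hH μ).ennreal_ofReal]
    refine setLIntegral_congr_fun measurableSet_Ioi fun z hz => ?_
    have hHz := Adm.nonneg hH (le_of_lt hz)
    rw [← ENNReal.ofReal_mul (by positivity), ← ENNReal.ofReal_add hHz (by positivity), add_comm]
  rw [Jfun, hI]
  rfl

/-- The admissible `H` for which `a ↦ J_a(H)` is finite on `(0, ∞)`; it is then affine in `a`,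
with the following intercept and slope. -/
def admFinite (μ : Measure ℝ) : Set (ℝ → ℝ) :=
  {H | H ∈ Adm ∧ linPart μ H ≠ ⊤ ∧ quadPart μ H ≠ ⊤}

def Jfun.intercept (μ ν : Measure ℝ) (θ : ℝ) (H : ℝ → ℝ) : ℝ :=
  (linPart μ H).toReal - (1 + θ) * (linPart ν H).toReal

def Jfun.slope (μ : Measure ℝ) (H : ℝ → ℝ) : ℝ := (quadPart μ H).toReal / 2

theorem Jfun.slope_nonneg : 0 ≤ Jfun.slope μ H := by unfold Jfun.slope; positivity

theorem Jfun_eq_coe (hH : H ∈ admFinite μ) (hν : linPart ν H ≠ ⊤) (hθ : 0 ≤ 1 + θ)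
    (ha : 0 ≤ a) :
    Jfun μ ν θ a H = ((Jfun.intercept μ ν θ H + a * Jfun.slope μ H : ℝ) : EReal) := by
  obtain ⟨hH, hlin, hquad⟩ := hH
  have hsum : linPart μ H + ENNReal.ofReal (a / 2) * quadPart μ H ≠ ⊤ :=
    ENNReal.add_ne_top.2 ⟨hlin, ENNReal.mul_ne_top ENNReal.ofReal_ne_top hquad⟩
  rw [Jfun_eq hH ha, ← EReal.coe_ennreal_toReal hsum,
    ← EReal.coe_ennreal_toReal (ENNReal.mul_ne_top ENNReal.ofReal_ne_top hν), ← EReal.coe_sub,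
    ENNReal.toReal_add hlin (ENNReal.mul_ne_top ENNReal.ofReal_ne_top hquad),
    ENNReal.toReal_mul, ENNReal.toReal_mul, ENNReal.toReal_ofReal (by positivity),
    ENNReal.toReal_ofReal hθ, Jfun.intercept, Jfun.slope]
  congr 1
  ring

theorem Jfun_eq_top (hH : H ∈ Adm) (hHfin : H ∉ admFinite μ) (hν : linPart ν H ≠ ⊤)
    (ha : 0 < a) : Jfun μ ν θ a H = ⊤ := by
  have hsum : linPart μ H + ENNReal.ofReal (a / 2) * quadPart μ H = ⊤ := by
    by_contra h
    obtain ⟨hlin, hquad⟩ := ENNReal.add_ne_top.1 h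
    exact hHfin ⟨hH, hlin, fun htop => hquad (by
      rw [htop, ENNReal.mul_top (ENNReal.ofReal_pos.2 (half_pos ha)).ne'])⟩
  rw [Jfun_eq hH ha.le, hsum,
    ← EReal.coe_ennreal_toReal (ENNReal.mul_ne_top ENNReal.ofReal_ne_top hν),
    EReal.coe_ennreal_top, EReal.top_sub_coe]

theorem linPart_le_linPart_id (hH : H ∈ Adm) : linPart ν H ≤ linPart ν id :=
  setLIntegral_mono' measurableSet_Ioi fun _ hz =>
    ENNReal.ofReal_le_ofReal (Adm.le_self hH (le_of_lt hz))

theorem coe_le_vfun_iff (hθ : 0 ≤ 1 + θ) (hν : linPart ν id ≠ ⊤) (ha : 0 < a) (x : ℝ) :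
    (x : EReal) ≤ vfun μ ν θ a ↔
      x ∈ lowerBounds ((fun H => Jfun.intercept μ ν θ H + a * Jfun.slope μ H) '' admFinite μ) := by
  have hνH : ∀ H ∈ Adm, linPart ν H ≠ ⊤ := fun H hH =>
    ne_top_of_le_ne_top hν (linPart_le_linPart_id hH)
  rw [vfun, le_iInf₂_iff, mem_lowerBounds, forall_mem_image]
  constructor
  · intro h H hH
    have := h H hH.1
    rwa [Jfun_eq_coe hH (hνH H hH.1) hθ ha.le, EReal.coe_le_coe_iff] at this
  · intro h H hH
    by_cases hHfin : H ∈ admFinite μ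
    · rw [Jfun_eq_coe hHfin (hνH H hH) hθ ha.le]
      exact EReal.coe_le_coe_iff.2 (h hHfin)
    · rw [Jfun_eq_top hH hHfin (hνH H hH) ha]
      exact le_top

end Objective

def stopLoss (ν : Measure ℝ) (T : ℝ) : ℝ≥0∞ := ∫⁻ z in Ioi 0, ENNReal.ofReal (z - T) ∂ν

section StopLoss

variable {ν : Measure ℝ}

theorem tendsto_stopLoss_atTop (hν : linPart ν id ≠ ⊤) : Tendsto (stopLoss ν) atTop (𝓝 0) := by
  have hlim := tendsto_lintegral_filter_of_dominated_convergence (μ := ν.restrict (Ioi 0))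
    (F := fun T z => ENNReal.ofReal (z - T)) (f := 0) (fun z => ENNReal.ofReal z)
    (Eventually.of_forall fun T => by fun_prop)
    ((eventually_ge_atTop 0).mono fun T hT => Eventually.of_forall fun z =>
      ENNReal.ofReal_le_ofReal (by linarith))
    hν
    (Eventually.of_forall fun z => tendsto_const_nhds.congr'
      ((eventually_ge_atTop z).mono fun T hT => (ENNReal.ofReal_of_nonpos (by linarith)).symm))
  simp only [Pi.zero_apply, lintegral_zero] at hlim
  exact hlim

theorem stopLoss_le_add (T η : ℝ) :
    stopLoss ν T ≤ ENNReal.ofReal η * ν (Ioi 0) + stopLoss ν (T + η) := by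
  rw [stopLoss, stopLoss, ← setLIntegral_const, ← lintegral_add_left measurable_const]
  refine setLIntegral_mono' measurableSet_Ioi fun z _ => ?_
  calc ENNReal.ofReal (z - T) = ENNReal.ofReal (η + (z - (T + η))) := by ring_nf
    _ ≤ _ := ENNReal.ofReal_add_le

theorem stopLoss_eq_zero {T : ℝ} (hT : ν (Ioi T) = 0) : stopLoss ν T = 0 := by
  have hle : ∀ᵐ z ∂ν, z ≤ T := by
    rw [ae_iff]
    simp only [not_le]
    exact hT
  refine (lintegral_congr_ae (ae_restrict_of_ae (hle.mono fun z hz => ?_))).trans lintegral_zero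
  exact ENNReal.ofReal_of_nonpos (by linarith)

/-- The stop-loss transform becomes small before the essential supremum of `ν` is reached. -/
theorem exists_stopLoss_le [IsFiniteMeasure ν] (hν : linPart ν id ≠ ⊤) (h0 : ν (Ioi 0) ≠ 0)
    {ε : ℝ≥0∞} (hε : ε ≠ 0) : ∃ T, 0 ≤ T ∧ ν (Ioi T) ≠ 0 ∧ stopLoss ν T ≤ ε := by
  by_cases hunb : ∀ T, ν (Ioi T) ≠ 0
  · obtain ⟨T, hT, hTε⟩ := ((eventually_ge_atTop 0).and
      ((tendsto_stopLoss_atTop hν).eventually (ge_mem_nhds hε.bot_lt))).exists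
    exact ⟨T, hT, hunb T, hTε⟩
  push Not at hunb
  obtain ⟨T₁, hT₁⟩ := hunb
  set U := {T | ν (Ioi T) ≠ 0}
  have hU : BddAbove U := ⟨T₁, fun T hT => not_lt.1 fun h =>
    hT (measure_mono_null (Ioi_subset_Ioi h.le) hT₁)⟩
  obtain ⟨η, hη, hηε⟩ := ENNReal.exists_nnreal_pos_mul_lt (measure_ne_top ν (Ioi 0)) hε
  obtain ⟨T, hTU, hT⟩ := exists_lt_of_lt_csSup ⟨0, h0⟩ (sub_lt_self (sSup U) (NNReal.coe_pos.2 hη))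
  refine ⟨max T 0, le_max_right T 0, ?_, ?_⟩
  · rcases max_cases T 0 with ⟨h, -⟩ | ⟨h, -⟩ <;> rw [h] <;> assumption
  have hnull : ν (Ioi (max T 0 + η)) = 0 := by
    by_contra h
    have := le_csSup hU h
    have := le_max_left T 0
    linarith
  calc stopLoss ν (max T 0) ≤ ENNReal.ofReal η * ν (Ioi 0) + stopLoss ν (max T 0 + η) :=
        stopLoss_le_add _ _
    _ ≤ ε := by rw [stopLoss_eq_zero hnull, add_zero, ENNReal.ofReal_coe_nnreal]; exact hηε.le

end StopLoss

section SmallEnergy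

variable {μ ν : Measure ℝ} {H : ℝ → ℝ}

theorem linPart_le_add_stopLoss (hH : H ∈ Adm) {T : ℝ} (hT : 0 ≤ T) :
    linPart ν H ≤ ENNReal.ofReal (H T) * ν (Ioi 0) + stopLoss ν T := by
  rw [linPart, stopLoss, ← setLIntegral_const, ← lintegral_add_left measurable_const]
  refine setLIntegral_mono' measurableSet_Ioi fun z hz => ?_
  calc ENNReal.ofReal (H z) ≤ ENNReal.ofReal (H T + max (z - T) 0) :=
        ENNReal.ofReal_le_ofReal (Adm.le_add_sub hH hT (le_of_lt hz))
    _ ≤ ENNReal.ofReal (H T) + ENNReal.ofReal (max (z - T) 0) := ENNReal.ofReal_add_le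
    _ = ENNReal.ofReal (H T) + ENNReal.ofReal (z - T) := by
        rw [ENNReal.ofReal_max, ENNReal.ofReal_zero, max_eq_left zero_le]

theorem ofReal_sq_mul_le_quadPart (hH : H ∈ Adm) {T : ℝ} (hT : 0 ≤ T) :
    ENNReal.ofReal (H T ^ 2) * μ (Ioi T) ≤ quadPart μ H := by
  rw [← setLIntegral_const]
  refine (setLIntegral_mono' measurableSet_Ioi fun z hz => ENNReal.ofReal_le_ofReal ?_).trans
    (lintegral_mono_set (Ioi_subset_Ioi hT))
  have hHT := Adm.nonneg hH hT
  have := Adm.mono hH hT (le_of_lt hz)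
  nlinarith

/-- `H(T)² μ(T, ∞) ≤ ∫ H² dμ` makes `H(T)` small, and `H ≤ H(T) + (z - T)⁺` then bounds
`∫ H dν` by `H(T) ν(0, ∞)` plus the stop-loss of `ν` at `T`. -/
theorem exists_linPart_le_of_quadPart_le [IsFiniteMeasure μ] [IsFiniteMeasure ν]
    (hν : linPart ν id ≠ ⊤) (hsupp : ∀ T, 0 ≤ T → ν (Ioi T) ≠ 0 → μ (Ioi T) ≠ 0)
    {ε : ℝ≥0∞} (hε : ε ≠ 0) :
    ∃ δ > 0, ∀ H ∈ Adm, quadPart μ H ≤ ENNReal.ofReal δ → linPart ν H ≤ ε := by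
  by_cases h0 : ν (Ioi 0) = 0
  · refine ⟨1, one_pos, fun H _ _ => ?_⟩
    rw [linPart, setLIntegral_measure_zero _ _ h0]
    exact zero_le
  obtain ⟨T, hT, hνT, hTε⟩ := exists_stopLoss_le hν h0 (ENNReal.half_pos hε).ne'
  obtain ⟨η, hη, hηε⟩ :=
    ENNReal.exists_nnreal_pos_mul_lt (measure_ne_top ν (Ioi 0)) (ENNReal.half_pos hε).ne'
  have hμT : μ (Ioi T) ≠ 0 := hsupp T hT hνT
  have hδ : ENNReal.ofReal ((η : ℝ) ^ 2) * μ (Ioi T) ≠ ⊤ :=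
    ENNReal.mul_ne_top ENNReal.ofReal_ne_top (measure_ne_top μ _)
  have hη2 : ENNReal.ofReal ((η : ℝ) ^ 2) ≠ 0 :=
    (ENNReal.ofReal_pos.2 (pow_pos (NNReal.coe_pos.2 hη) 2)).ne'
  refine ⟨(ENNReal.ofReal ((η : ℝ) ^ 2) * μ (Ioi T)).toReal,
    ENNReal.toReal_pos (mul_ne_zero hη2 hμT) hδ, fun H hH hquad => ?_⟩
  rw [ENNReal.ofReal_toReal hδ] at hquad
  have hHT : H T ≤ η := by
    have h := (ofReal_sq_mul_le_quadPart hH hT).trans hquad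
    rw [ENNReal.mul_le_mul_iff_left hμT (measure_ne_top μ _),
      ENNReal.ofReal_le_ofReal_iff (by positivity)] at h
    exact (pow_le_pow_iff_left₀ (Adm.nonneg hH hT) η.2 two_ne_zero).1 h
  calc linPart ν H ≤ ENNReal.ofReal (H T) * ν (Ioi 0) + stopLoss ν T :=
        linPart_le_add_stopLoss hH hT
    _ ≤ ε / 2 + ε / 2 := by
        gcongr
        exact (mul_le_mul_left (ENNReal.ofReal_le_ofReal hHT) _).trans
          (by rw [ENNReal.ofReal_coe_nnreal]; exact hηε.le)
    _ = ε := ENNReal.add_halves ε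

end SmallEnergy

section Negativity

variable {μ ν : Measure ℝ} {θ : ℝ} {H : ℝ → ℝ}

theorem tendsto_linPart_min (hν : linPart ν id ≠ ⊤) :
    Tendsto (fun N : ℝ => linPart ν fun z => min z N) atTop (𝓝 (linPart ν id)) :=
  tendsto_lintegral_filter_of_dominated_convergence (fun z => ENNReal.ofReal z)
    (Eventually.of_forall fun N => by fun_prop)
    (Eventually.of_forall fun N => Eventually.of_forall fun z =>
      ENNReal.ofReal_le_ofReal (min_le_left z N))
    hν
    (Eventually.of_forall fun z => tendsto_const_nhds.congr'
      ((eventually_ge_atTop z).mono fun N hN => by simp only [min_eq_left hN, id]))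

theorem linPart_const_mul {ε : ℝ} (hε : 0 ≤ ε) :
    linPart μ (fun z => ε * H z) = ENNReal.ofReal ε * linPart μ H := by
  simp_rw [linPart, ENNReal.ofReal_mul hε]
  exact lintegral_const_mul' _ _ ENNReal.ofReal_ne_top

theorem quadPart_const_mul (ε : ℝ) :
    quadPart μ (fun z => ε * H z) = ENNReal.ofReal (ε ^ 2) * quadPart μ H := by
  simp_rw [quadPart, mul_pow, ENNReal.ofReal_mul (sq_nonneg ε)]
  exact lintegral_const_mul' _ _ ENNReal.ofReal_ne_top

theorem const_mul_mem_admFinite (hH : H ∈ admFinite μ) {ε : ℝ} (hε : 0 ≤ ε) (hε1 : ε ≤ 1) :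
    (fun z => ε * H z) ∈ admFinite μ :=
  ⟨Adm.const_mul_mem hH.1 hε hε1,
    by rw [linPart_const_mul hε]; exact ENNReal.mul_ne_top ENNReal.ofReal_ne_top hH.2.1,
    by rw [quadPart_const_mul]; exact ENNReal.mul_ne_top ENNReal.ofReal_ne_top hH.2.2⟩

theorem exists_intercept_neg [IsFiniteMeasure μ] (hθ : 0 ≤ 1 + θ) (hν : linPart ν id ≠ ⊤)
    (hmom : linPart μ id < ENNReal.ofReal (1 + θ) * linPart ν id) :
    ∃ H ∈ admFinite μ, Jfun.intercept μ ν θ H < 0 := by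
  have hlim := ENNReal.Tendsto.const_mul (tendsto_linPart_min hν)
    (Or.inr (ENNReal.ofReal_ne_top (r := 1 + θ)))
  obtain ⟨N, hN, hmomN⟩ := ((eventually_ge_atTop 0).and (hlim.eventually_const_lt hmom)).exists
  have hAdm := Adm.min_mem hN
  have hlinμ : linPart μ (fun z => min z N) ≤ linPart μ id :=
    setLIntegral_mono' measurableSet_Ioi fun z _ => ENNReal.ofReal_le_ofReal (min_le_left z N)
  have hquad : quadPart μ (fun z => min z N) ≤ ENNReal.ofReal (N ^ 2) * μ (Ioi 0) := by
    rw [quadPart, ← setLIntegral_const]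
    refine setLIntegral_mono' measurableSet_Ioi fun z hz => ENNReal.ofReal_le_ofReal ?_
    have h0 : 0 ≤ min z N := Adm.nonneg hAdm (le_of_lt hz)
    nlinarith [min_le_right z N]
  have hlinμ_ne := ne_top_of_le_ne_top (hmom.trans_le le_top).ne hlinμ
  have hlinν_ne : linPart ν (fun z => min z N) ≠ ⊤ :=
    ne_top_of_le_ne_top hν (setLIntegral_mono' measurableSet_Ioi fun z _ =>
      ENNReal.ofReal_le_ofReal (min_le_left z N))
  refine ⟨_, ⟨hAdm, hlinμ_ne,
    ne_top_of_le_ne_top (ENNReal.mul_ne_top ENNReal.ofReal_ne_top (measure_ne_top μ _)) hquad⟩, ?_⟩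
  have hlt := (ENNReal.toReal_lt_toReal hlinμ_ne
    (ENNReal.mul_ne_top ENNReal.ofReal_ne_top hlinν_ne)).2 (hlinμ.trans_lt hmomN)
  rw [ENNReal.toReal_mul, ENNReal.toReal_ofReal hθ] at hlt
  exact sub_neg.2 hlt

theorem Jfun.intercept_const_mul {ε : ℝ} (hε : 0 ≤ ε) :
    Jfun.intercept μ ν θ (fun z => ε * H z) = ε * Jfun.intercept μ ν θ H := by
  simp only [Jfun.intercept, linPart_const_mul hε, ENNReal.toReal_mul,
    ENNReal.toReal_ofReal hε]
  ring

theorem Jfun.slope_const_mul (ε : ℝ) :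
    Jfun.slope μ (fun z => ε * H z) = ε ^ 2 * Jfun.slope μ H := by
  simp only [Jfun.slope, quadPart_const_mul, ENNReal.toReal_mul,
    ENNReal.toReal_ofReal (sq_nonneg ε)]
  ring

/-- Scaling down an `H` with negative intercept makes the quadratic term negligible. -/
theorem exists_intercept_add_slope_neg [IsFiniteMeasure μ] (hθ : 0 ≤ 1 + θ)
    (hν : linPart ν id ≠ ⊤) (hmom : linPart μ id < ENNReal.ofReal (1 + θ) * linPart ν id)
    {b : ℝ} (hb : 0 ≤ b) :
    ∃ H ∈ admFinite μ, Jfun.intercept μ ν θ H + b * Jfun.slope μ H < 0 := by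
  obtain ⟨H, hH, hc⟩ := exists_intercept_neg hθ hν hmom
  set c := Jfun.intercept μ ν θ H
  set m := Jfun.slope μ H
  have hbm : 0 ≤ b * m := mul_nonneg hb Jfun.slope_nonneg
  set ε := min 1 (-c / (b * m + 1))
  have hε : 0 < ε := lt_min one_pos (div_pos (neg_pos.2 hc) (by linarith))
  have hεbm : ε * (b * m) < -c := by
    calc ε * (b * m) ≤ -c / (b * m + 1) * (b * m) :=
          mul_le_mul_of_nonneg_right (min_le_right _ _) hbm
      _ < -c := by
          rw [div_mul_eq_mul_div, div_lt_iff₀ (by linarith)]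
          nlinarith
  refine ⟨_, const_mul_mem_admFinite hH hε.le (min_le_left _ _), ?_⟩
  rw [Jfun.intercept_const_mul hε.le, Jfun.slope_const_mul]
  nlinarith

end Negativity

section ValueFunction

variable {μ ν : Measure ℝ} {θ : ℝ}

theorem Jfun.neg_le_intercept (hθ : 0 ≤ 1 + θ) (hν : linPart ν id ≠ ⊤) {H : ℝ → ℝ}
    (hH : H ∈ Adm) : -((1 + θ) * (linPart ν id).toReal) ≤ Jfun.intercept μ ν θ H := by
  have := mul_le_mul_of_nonneg_left (ENNReal.toReal_mono hν (linPart_le_linPart_id hH)) hθ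
  unfold Jfun.intercept
  linarith [(linPart μ H).toReal_nonneg]

theorem exists_neg_le_intercept_of_slope_le [IsFiniteMeasure μ] [IsFiniteMeasure ν]
    (hθ : 0 < 1 + θ) (hν : linPart ν id ≠ ⊤)
    (hsupp : ∀ T, 0 ≤ T → ν (Ioi T) ≠ 0 → μ (Ioi T) ≠ 0) {ε : ℝ} (hε : 0 < ε) :
    ∃ δ > 0, ∀ H ∈ admFinite μ, Jfun.slope μ H ≤ δ → -ε ≤ Jfun.intercept μ ν θ H := by
  obtain ⟨δ, hδ, hlin⟩ := exists_linPart_le_of_quadPart_le hν hsupp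
    (ENNReal.ofReal_pos.2 (div_pos hε hθ)).ne'
  refine ⟨δ / 2, half_pos hδ, fun H hH hslope => ?_⟩
  have hquad : quadPart μ H ≤ ENNReal.ofReal δ := by
    rw [← ENNReal.ofReal_toReal hH.2.2]
    exact ENNReal.ofReal_le_ofReal (by unfold Jfun.slope at hslope; linarith)
  have h := ENNReal.toReal_le_of_le_ofReal (div_pos hε hθ).le (hlin H hH.1 hquad)
  rw [le_div_iff₀ hθ] at h
  unfold Jfun.intercept
  linarith [(linPart μ H).toReal_nonneg]

theorem vfun_lt_zero [IsFiniteMeasure μ] (hθ : 0 ≤ 1 + θ) (hν : linPart ν id ≠ ⊤)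
    (hmom : linPart μ id < ENNReal.ofReal (1 + θ) * linPart ν id) {a : ℝ} (ha : 0 < a) :
    vfun μ ν θ a < 0 := by
  obtain ⟨H, hH, hJ⟩ := exists_intercept_add_slope_neg hθ hν hmom ha.le
  calc vfun μ ν θ a ≤ Jfun μ ν θ a H := iInf₂_le H hH.1
    _ < 0 := by
        rw [Jfun_eq_coe hH (ne_top_of_le_ne_top hν (linPart_le_linPart_id hH.1)) hθ ha.le]
        exact_mod_cast hJ

theorem neg_le_vfun (hθ : 0 ≤ 1 + θ) (hν : linPart ν id ≠ ⊤) {a : ℝ} (ha : 0 < a) :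
    ((-((1 + θ) * (linPart ν id).toReal) : ℝ) : EReal) ≤ vfun μ ν θ a :=
  (coe_le_vfun_iff hθ hν ha _).2 <| forall_mem_image.2 fun _ hH =>
    (Jfun.neg_le_intercept hθ hν hH.1).trans
      (le_add_of_nonneg_right (mul_nonneg ha.le Jfun.slope_nonneg))

theorem vfun_bounded_continuous_strictMono_concave [IsFiniteMeasure μ] [IsFiniteMeasure ν]
    (hmom : linPart μ id < ENNReal.ofReal (1 + θ) * linPart ν id)
    (hfin : ENNReal.ofReal (1 + θ) * linPart ν id < ⊤)
    (hsupp : ∀ T, 0 ≤ T → ν (Ioi T) ≠ 0 → μ (Ioi T) ≠ 0) :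
    ∃ w : ℝ → ℝ,
      (∀ a ∈ Ioi (0 : ℝ), vfun μ ν θ a = (w a : EReal)) ∧
      (∃ M : ℝ, ∀ a ∈ Ioi (0 : ℝ), |w a| ≤ M) ∧
      ContinuousOn w (Ioi 0) ∧ StrictMonoOn w (Ioi 0) ∧ ConcaveOn ℝ (Ioi 0) w := by
  have hθ : 0 < 1 + θ := by
    by_contra! h
    rw [ENNReal.ofReal_of_nonpos h, zero_mul] at hmom
    exact ENNReal.not_lt_zero hmom
  have hν : linPart ν id ≠ ⊤ := fun h => by
    rw [h, ENNReal.mul_top (ENNReal.ofReal_pos.2 hθ).ne'] at hfin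
    exact lt_irrefl _ hfin
  set w := fun a => (vfun μ ν θ a).toReal
  have hv : ∀ a ∈ Ioi (0 : ℝ), vfun μ ν θ a = (w a : EReal) := fun a ha =>
    (EReal.coe_toReal ((vfun_lt_zero hθ.le hν hmom ha).trans EReal.zero_lt_top).ne
      ((EReal.bot_lt_coe _).trans_le (neg_le_vfun hθ.le hν ha)).ne').symm
  have hw : ∀ a ∈ Ioi (0 : ℝ), IsGLB ((fun H => Jfun.intercept μ ν θ H + a * Jfun.slope μ H) ''
      admFinite μ) (w a) := fun a ha => isGLB_iff_le_iff.2 fun x => by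
    rw [← EReal.coe_le_coe_iff, ← hv a ha, coe_le_vfun_iff hθ.le hν ha]
  have hneg : ∀ a ∈ Ioi (0 : ℝ), w a < 0 := fun a ha => by
    exact_mod_cast (hv a ha) ▸ vfun_lt_zero hθ.le hν hmom ha
  have hconc := concaveOn_of_isGLB_affine hw
  refine ⟨w, hv, ⟨(1 + θ) * (linPart ν id).toReal, fun a ha => ?_⟩,
    hconc.continuousOn isOpen_Ioi, strictMonoOn_of_isGLB_affine hw (fun _ _ => Jfun.slope_nonneg)
      (fun _ hε => exists_neg_le_intercept_of_slope_le hθ hν hsupp hε) hneg, hconc⟩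
  have hlow : -((1 + θ) * (linPart ν id).toReal) ≤ w a := by
    exact_mod_cast (hv a ha) ▸ neg_le_vfun hθ.le hν ha
  rw [abs_of_neg (hneg a ha)]
  linarith

end ValueFunction

theorem StieltjesFunction.isProbabilityMeasure_of_eq_zero {F : StieltjesFunction ℝ}
    (hF_neg : ∀ z : ℝ, z < 0 → F z = 0) (hF_top : Tendsto (fun z => F z) atTop (𝓝 1)) :
    IsProbabilityMeasure F.measure :=
  F.isProbabilityMeasure (tendsto_const_nhds.congr'
    ((eventually_lt_atBot 0).mono fun z hz => (hF_neg z hz).symm)) hF_top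

theorem measure_Ioi_eq_zero_of_dual {F Fhat : StieltjesFunction ℝ} {g : ℝ → ℝ}
    (hF_top : Tendsto (fun z => F z) atTop (𝓝 1)) (hg_zero : g 0 = 0)
    (hFhat : ∀ z : ℝ, Fhat z = if z < 0 then 0 else 1 - g (1 - F z) / g (1 - F 0))
    (hFhat_top : Tendsto (fun z => Fhat z) atTop (𝓝 1)) {T : ℝ} (hT : 0 ≤ T)
    (h : F.measure (Ioi T) = 0) : Fhat.measure (Ioi T) = 0 := by
  rw [F.measure_Ioi hF_top, ENNReal.ofReal_eq_zero, sub_nonpos] at h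
  have hFT : F T = 1 := le_antisymm (F.mono.ge_of_tendsto hF_top T) h
  rw [Fhat.measure_Ioi hFhat_top, hFhat, if_neg (not_lt.2 hT), hFT, sub_self, hg_zero,
    zero_div, sub_zero, sub_self, ENNReal.ofReal_zero]

theorem stmt_2_general
    (F Fhat : StieltjesFunction ℝ) (g : ℝ → ℝ) (θ : ℝ)
    (hF_neg : ∀ z : ℝ, z < 0 → F z = 0)
    (hF_top : Tendsto (fun z => F z) atTop (nhds 1))
    (hg_zero : g 0 = 0)
    (hFhat : ∀ z : ℝ, Fhat z = if z < 0 then 0 else 1 - g (1 - F z) / g (1 - F 0))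
    (hFhat_top : Tendsto (fun z => Fhat z) atTop (nhds 1))
    (hmom : (∫⁻ z in Set.Ioi (0:ℝ), ENNReal.ofReal z ∂F.measure) <
        ENNReal.ofReal (1 + θ) * ∫⁻ z in Set.Ioi (0:ℝ), ENNReal.ofReal z ∂Fhat.measure)
    (hfin : ENNReal.ofReal (1 + θ) *
        (∫⁻ z in Set.Ioi (0:ℝ), ENNReal.ofReal z ∂Fhat.measure) < ⊤) :
    ∃ w : ℝ → ℝ,
      (∀ a ∈ Set.Ioi (0:ℝ), vfun F.measure Fhat.measure θ a = (w a : EReal)) ∧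
      (∃ M : ℝ, ∀ a ∈ Set.Ioi (0:ℝ), |w a| ≤ M) ∧
      ContinuousOn w (Set.Ioi 0) ∧
      StrictMonoOn w (Set.Ioi 0) ∧
      ConcaveOn ℝ (Set.Ioi 0) w := by
  have := StieltjesFunction.isProbabilityMeasure_of_eq_zero hF_neg hF_top
  have := StieltjesFunction.isProbabilityMeasure_of_eq_zero
    (fun z hz => by rw [hFhat, if_pos hz]) hFhat_top
  exact vfun_bounded_continuous_strictMono_concave hmom hfin fun T hT =>
    mt (measure_Ioi_eq_zero_of_dual hF_top hg_zero hFhat hFhat_top hT)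

/-- v is (real-valued,) bounded, continuous, strictly increasing and
concave on (0,∞). -/
theorem stmt_2
    (F Fhat : StieltjesFunction ℝ) (g : ℝ → ℝ) (θ0 θ : ℝ)
    (hF_neg : ∀ z : ℝ, z < 0 → F z = 0)
    (hF_top : Tendsto (fun z => F z) atTop (nhds 1))
    (hg_mono : MonotoneOn g (Set.Icc 0 1))
    (hg_left : ∀ p ∈ Set.Ioc (0:ℝ) 1, Tendsto g (nhdsWithin p (Set.Iio p)) (nhds (g p)))
    (hg_zero : g 0 = 0)
    (hg_zero' : Tendsto g (nhdsWithin 0 (Set.Ioi 0)) (nhds 0))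
    (hg_one : g 1 = 1)
    (hg_pos : 0 < g (1 - F 0))
    (hθ0 : -1 < θ0)
    (hθ : θ = (1 + θ0) * g (1 - F 0) - 1)
    (hFhat : ∀ z : ℝ, Fhat z = if z < 0 then 0 else 1 - g (1 - F z) / g (1 - F 0))
    (hFhat_top : Tendsto (fun z => Fhat z) atTop (nhds 1))
    (hmom : (∫⁻ z in Set.Ioi (0:ℝ), ENNReal.ofReal z ∂F.measure) <
        ENNReal.ofReal (1 + θ) * ∫⁻ z in Set.Ioi (0:ℝ), ENNReal.ofReal z ∂Fhat.measure)
    (hfin : ENNReal.ofReal (1 + θ) *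
        (∫⁻ z in Set.Ioi (0:ℝ), ENNReal.ofReal z ∂Fhat.measure) < ⊤) :
    ∃ w : ℝ → ℝ,
      (∀ a ∈ Set.Ioi (0:ℝ), vfun F.measure Fhat.measure θ a = (w a : EReal)) ∧
      (∃ M : ℝ, ∀ a ∈ Set.Ioi (0:ℝ), |w a| ≤ M) ∧
      ContinuousOn w (Set.Ioi 0) ∧
      StrictMonoOn w (Set.Ioi 0) ∧
      ConcaveOn ℝ (Set.Ioi 0) w :=
  stmt_2_general F Fhat g θ hF_neg hF_top hg_zero hFhat hFhat_top hmom hfin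
end
end

section
/- Assume ∫_{(0,∞)} z dμ_F(z) < ∞ and ∫_{(0,∞)} z dμ_F(z) < (1+θ)·∫_{(0,∞)} z dμ_F̂(z). Then v(a) < 0 for every a ∈ (0,∞). -/
/-!
Test `J_a` on `H = ε · min(z, n)`. By monotone convergence some truncation level `n` already
satisfies `∫ z dμ_F < (1+θ) ∫ min(z, n) dμ_F̂`. Since `0 ≤ H ≤ ε n` on `(0,∞)`, the quadratic term
is at most `(|a| ε n / 2) · H`, so `J_a(H) ≤ ε ((1 + |a| ε n / 2) A − B)` with
`A = ∫ min(z, n) dμ_F < B = (1+θ) ∫ min(z, n) dμ_F̂`, which is negative once `ε` is small.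
-/

open MeasureTheory Set Filter Topology
open scoped ENNReal

noncomputable section

lemma EReal.coe_ennreal_sub_coe_ennreal_neg {x y : ℝ≥0∞} (h : x < y) : (x : EReal) - y < 0 :=
  (EReal.sub_neg (.inl (EReal.coe_ennreal_eq_top_iff.not.2 h.ne_top))
    (.inl (EReal.coe_ennreal_ne_bot _))).2 (EReal.coe_ennreal_lt_coe_ennreal_iff.2 h)

lemma iSup_lintegral_ofReal_min_natCast (μ : Measure ℝ) :
    ⨆ n : ℕ, ∫⁻ z, ENNReal.ofReal (min z n) ∂μ = ∫⁻ z, ENNReal.ofReal z ∂μ := by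
  rw [← lintegral_iSup (f := fun (n : ℕ) z => ENNReal.ofReal (min z n))
    (fun n => (measurable_id.min measurable_const).ennreal_ofReal)
    fun m n hmn z => ENNReal.ofReal_le_ofReal (min_le_min_left z (by exact_mod_cast hmn))]
  refine lintegral_congr fun z => le_antisymm
    (iSup_le fun n => ENNReal.ofReal_le_ofReal (min_le_left _ _)) ?_
  exact le_iSup_of_le ⌈z⌉₊ (by rw [min_eq_left (Nat.le_ceil z)])

lemma mul_min_mem_Adm {ε : ℝ} (hε₀ : 0 ≤ ε) (hε₁ : ε ≤ 1) {n : ℝ} (hn : 0 ≤ n) :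
    (fun z => ε * min z n) ∈ Adm := by
  have hlip : LipschitzWith 1 fun z : ℝ => ε * min z n :=
    ((lipschitzWith_smul ε).comp (LipschitzWith.id.min_const n)).weaken <| by
      rw [mul_one, ← NNReal.coe_le_coe, coe_nnnorm, Real.norm_of_nonneg hε₀]
      exact hε₁
  exact ⟨by simp [hn], fun z hz => mul_nonneg hε₀ (le_min hz hn),
    fun x _ y _ hxy => mul_le_mul_of_nonneg_left (min_le_min_right n hxy) hε₀,
    hlip.lipschitzOnWith⟩

lemma Jfun_mul_min_le (μF μFhat : Measure ℝ) (θ a : ℝ) {ε : ℝ} (hε : 0 ≤ ε) {n : ℝ}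
    (hn : 0 ≤ n) :
    Jfun μF μFhat θ a (fun z => ε * min z n) ≤
      ((ENNReal.ofReal ε * (ENNReal.ofReal (1 + |a| * n / 2 * ε) *
          ∫⁻ z in Ioi 0, ENNReal.ofReal (min z n) ∂μF) : ℝ≥0∞) : EReal) -
        ((ENNReal.ofReal ε * (ENNReal.ofReal (1 + θ) *
          ∫⁻ z in Ioi 0, ENNReal.ofReal (min z n) ∂μFhat) : ℝ≥0∞) : EReal) := by
  have hmeas : Measurable fun z : ℝ => ENNReal.ofReal (min z n) :=
    (measurable_id.min measurable_const).ennreal_ofReal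
  refine EReal.sub_le_sub (EReal.coe_ennreal_le_coe_ennreal_iff.2 ?_) (le_of_eq ?_)
  · rw [← lintegral_const_mul _ hmeas, ← lintegral_const_mul _ (hmeas.const_mul _)]
    refine setLIntegral_mono ((hmeas.const_mul _).const_mul _) fun z hz => ?_
    have hm₀ : 0 ≤ min z n := le_min (le_of_lt hz) hn
    have hmn : min z n ≤ n := min_le_right _ _
    have ham : a * min z n ≤ |a| * n := (mul_le_mul_of_nonneg_right (le_abs_self a) hm₀).trans
      (mul_le_mul_of_nonneg_left hmn (abs_nonneg a))
    rw [← ENNReal.ofReal_mul (by positivity), ← ENNReal.ofReal_mul hε]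
    refine ENNReal.ofReal_le_ofReal ?_
    nlinarith [mul_le_mul_of_nonneg_left ham (mul_nonneg (sq_nonneg ε) hm₀)]
  · rw [mul_left_comm, ← lintegral_const_mul _ hmeas]
    simp_rw [ENNReal.ofReal_mul hε]

lemma eventually_ofReal_one_add_mul_mul_lt {A B : ℝ≥0∞} (h : A < B) (κ : ℝ) :
    ∀ᶠ ε in 𝓝 (0 : ℝ), ENNReal.ofReal (1 + κ * ε) * A < B := by
  have hlim : Tendsto (fun ε : ℝ => ENNReal.ofReal (1 + κ * ε) * A) (𝓝 0) (𝓝 A) := by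
    have := ENNReal.Tendsto.mul_const ((ENNReal.continuous_ofReal.comp
      (by fun_prop : Continuous fun ε : ℝ => 1 + κ * ε)).tendsto 0) (b := A) (.inr h.ne_top)
    simpa using this
  exact hlim.eventually (gt_mem_nhds h)

theorem exists_mem_Adm_Jfun_neg (μF μFhat : Measure ℝ) (θ a : ℝ)
    (hmom : (∫⁻ z in Ioi (0:ℝ), ENNReal.ofReal z ∂μF) <
        ENNReal.ofReal (1 + θ) * ∫⁻ z in Ioi (0:ℝ), ENNReal.ofReal z ∂μFhat) :
    ∃ H ∈ Adm, Jfun μF μFhat θ a H < 0 := by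
  rw [← iSup_lintegral_ofReal_min_natCast (μFhat.restrict _), ENNReal.mul_iSup] at hmom
  obtain ⟨n, hn⟩ := lt_iSup_iff.1 hmom
  set B := ENNReal.ofReal (1 + θ) * ∫⁻ z in Ioi 0, ENNReal.ofReal (min z n) ∂μFhat
  set A := ∫⁻ z in Ioi 0, ENNReal.ofReal (min z n) ∂μF
  have hAB : A < B :=
    (lintegral_mono fun z => ENNReal.ofReal_le_ofReal (min_le_left _ _)).trans_lt hn
  obtain ⟨ε, hεAB, hε⟩ := ((eventually_ofReal_one_add_mul_mul_lt hAB (|a| * n / 2)).filter_mono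
    nhdsWithin_le_nhds |>.and (Ioo_mem_nhdsGT one_pos)).exists
  refine ⟨_, mul_min_mem_Adm hε.1.le hε.2.le n.cast_nonneg, ?_⟩
  refine (Jfun_mul_min_le μF μFhat θ a hε.1.le n.cast_nonneg).trans_lt ?_
  exact EReal.coe_ennreal_sub_coe_ennreal_neg <|
    ENNReal.mul_lt_mul_right (ENNReal.ofReal_pos.2 hε.1).ne' ENNReal.ofReal_ne_top hεAB

theorem stmt_5_general
    (F Fhat : StieltjesFunction ℝ) (θ : ℝ)
    (hmom : (∫⁻ z in Set.Ioi (0:ℝ), ENNReal.ofReal z ∂F.measure) <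
        ENNReal.ofReal (1 + θ) * ∫⁻ z in Set.Ioi (0:ℝ), ENNReal.ofReal z ∂Fhat.measure) :
    ∀ a ∈ Set.Ioi (0:ℝ), vfun F.measure Fhat.measure θ a < (0 : EReal) := by
  intro a _
  obtain ⟨H, hH, hJ⟩ := exists_mem_Adm_Jfun_neg F.measure Fhat.measure θ a hmom
  exact (iInf₂_le H hH).trans_lt hJ

/-- v(a) < 0 for every a ∈ (0,∞). -/
theorem stmt_5
    (F Fhat : StieltjesFunction ℝ) (g : ℝ → ℝ) (θ0 θ : ℝ)
    (hF_neg : ∀ z : ℝ, z < 0 → F z = 0)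
    (hF_top : Tendsto (fun z => F z) atTop (nhds 1))
    (hg_mono : MonotoneOn g (Set.Icc 0 1))
    (hg_left : ∀ p ∈ Set.Ioc (0:ℝ) 1, Tendsto g (nhdsWithin p (Set.Iio p)) (nhds (g p)))
    (hg_zero : g 0 = 0)
    (hg_zero' : Tendsto g (nhdsWithin 0 (Set.Ioi 0)) (nhds 0))
    (hg_one : g 1 = 1)
    (hg_pos : 0 < g (1 - F 0))
    (hθ0 : -1 < θ0)
    (hθ : θ = (1 + θ0) * g (1 - F 0) - 1)
    (hFhat : ∀ z : ℝ, Fhat z = if z < 0 then 0 else 1 - g (1 - F z) / g (1 - F 0))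
    (hFhat_top : Tendsto (fun z => Fhat z) atTop (nhds 1))
    (hF_fin : (∫⁻ z in Set.Ioi (0:ℝ), ENNReal.ofReal z ∂F.measure) < ⊤)
    (hmom : (∫⁻ z in Set.Ioi (0:ℝ), ENNReal.ofReal z ∂F.measure) <
        ENNReal.ofReal (1 + θ) * ∫⁻ z in Set.Ioi (0:ℝ), ENNReal.ofReal z ∂Fhat.measure) :
    ∀ a ∈ Set.Ioi (0:ℝ), vfun F.measure Fhat.measure θ a < (0 : EReal) :=
  stmt_5_general F Fhat θ hmom
end
end

section
/- Suppose g(p) = p for all p ∈ [0,1] and θ₀ > 0, and the standing assumption holds (which here reads 0 < E[Z] < π < (1+θ₀)·E[Z] with E[Z] = ∫_{(0,∞)} z dμ_F(z)). Then there exists d* > 0 such that H(z) = min{d*, z} satisfies J_{a*}(H) = v(a*); that is, the optimal reinsurance contract is a stop-loss contract with indemnity I*(z) = (z − d*)⁺. Moreover a* = θ₀/d*. -/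
open MeasureTheory Set Filter Topology
open scoped ENNReal

noncomputable section

/-! With `g = id` the dual measure is `μ_F / (1 - F 0)` on `(0, ∞)`, so that
`(1 + θ) ∫ H dμ_F̂ = (1 + θ₀) ∫ H dμ_F` and `J_a(H) = ∫ ((a/2) H² - θ₀ H) dμ_F`. The integrand is a
parabola in `H(z)` with vertex at `θ₀ / a`, and admissible `H` satisfy `0 ≤ H(z) ≤ z`; hence
`H(z) = min (θ₀ / a) z` minimises it pointwise, for every `a > 0` and in particular for `a*`. -/

lemma EReal.coe_ennreal_sub_le_sub {x y u v : ℝ≥0∞} (hu : u ≠ ⊤) (hv : v ≠ ⊤)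
    (h : x + v ≤ y + u) : (x : EReal) - u ≤ (y : EReal) - v := by
  rcases eq_or_ne y ⊤ with rfl | hy
  · rw [EReal.coe_ennreal_top, ← EReal.coe_ennreal_toReal hv, EReal.top_sub_coe]
    exact le_top
  have hyu : y + u ≠ ⊤ := ENNReal.add_ne_top.2 ⟨hy, hu⟩
  have hx : x ≠ ⊤ := ne_top_of_le_ne_top hyu (le_self_add.trans h)
  have h' := ENNReal.toReal_mono hyu h
  rw [ENNReal.toReal_add hx hv, ENNReal.toReal_add hy hu] at h'
  rw [← EReal.coe_ennreal_toReal hx, ← EReal.coe_ennreal_toReal hy,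
    ← EReal.coe_ennreal_toReal hu, ← EReal.coe_ennreal_toReal hv,
    ← EReal.coe_sub, ← EReal.coe_sub, EReal.coe_le_coe_iff]
  linarith

lemma StieltjesFunction.smul_measure_restrict_Ioi_eq {F G : StieltjesFunction ℝ} {c x₀ : ℝ}
    (hc : 0 < c) (h : ∀ x y, x₀ ≤ x → x ≤ y → c * (G y - G x) = F y - F x) :
    ENNReal.ofReal c • G.measure.restrict (Ioi x₀) = F.measure.restrict (Ioi x₀) := by
  refine (Measure.ext_of_Ioc _ _ fun a b _ => ?_).symm
  rw [Measure.smul_apply, Measure.restrict_apply measurableSet_Ioc,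
    Measure.restrict_apply measurableSet_Ioc, Ioc_inter_Ioi, G.measure_Ioc, F.measure_Ioc,
    smul_eq_mul, ← ENNReal.ofReal_mul hc.le]
  rcases le_or_gt (a ⊔ x₀) b with hab | hba
  · rw [h _ _ le_sup_right hab]
  · rw [ENNReal.ofReal_of_nonpos, ENNReal.ofReal_of_nonpos]
    · nlinarith [G.mono hba.le]
    · linarith [F.mono hba.le]

lemma le_self_of_mem_Adm {H : ℝ → ℝ} (hH : H ∈ Adm) {z : ℝ} (hz : 0 ≤ z) : H z ≤ z := by
  obtain ⟨h0, -, -, hlip⟩ := hH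
  have := hlip.dist_le_mul z hz 0 self_mem_Ici
  rw [h0, Real.dist_eq, Real.dist_eq, sub_zero, sub_zero, NNReal.coe_one, one_mul,
    abs_of_nonneg hz] at this
  exact (le_abs_self _).trans this

lemma min_mem_Adm {d : ℝ} (hd : 0 ≤ d) : (fun z => min d z) ∈ Adm := by
  refine ⟨min_eq_right hd, fun z hz => le_min hd hz,
    fun x _ y _ hxy => min_le_min le_rfl hxy, ?_⟩
  have : LipschitzWith 1 (fun z : ℝ => min d z) := by
    simpa using ((LipschitzWith.const d).weaken zero_le_one).min (LipschitzWith.id (α := ℝ))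
  exact this.lipschitzOnWith

/-- With `s = min d z` this is `a (s - h) (s + h - 2d) ≤ 0`: either `h ≤ s ≤ d`, or `s < h ≤ z`
forces `s = d < h`. -/
lemma stopLoss_integrand_le {a d h z : ℝ} (ha : 0 ≤ a) (hz : h ≤ z) :
    a / 2 * min d z ^ 2 + min d z + (1 + a * d) * h
      ≤ a / 2 * h ^ 2 + h + (1 + a * d) * min d z := by
  rcases le_or_gt h (min d z) with hs | hs
  · have hsd : min d z ≤ d := min_le_left _ _
    nlinarith [mul_nonneg (mul_nonneg ha (sub_nonneg.2 hs)) (by linarith : 0 ≤ 2 * d - min d z - h)]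
  · have hdz : d ≤ z := by
      by_contra! hzd
      rw [min_eq_right hzd.le] at hs
      linarith
    rw [min_eq_left hdz] at hs ⊢
    nlinarith [mul_nonneg (mul_nonneg ha (sub_nonneg.2 hs.le)) (by linarith : 0 ≤ h - d)]

section StopLoss

variable {μF μFhat : Measure ℝ} {θ a d : ℝ}

theorem Jfun_min_le (ha : 0 ≤ a) (hd : 0 ≤ d)
    (hdual : ENNReal.ofReal (1 + θ) • μFhat.restrict (Ioi 0)
      = ENNReal.ofReal (1 + a * d) • μF.restrict (Ioi 0))
    (hfin : ENNReal.ofReal (1 + θ) * (∫⁻ z in Ioi (0:ℝ), ENNReal.ofReal z ∂μFhat) < ⊤)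
    {H : ℝ → ℝ} (hH : H ∈ Adm) :
    Jfun μF μFhat θ a (fun z => min d z) ≤ Jfun μF μFhat θ a H := by
  have hloading : ∀ G : ℝ → ℝ,
      ENNReal.ofReal (1 + θ) * ∫⁻ z in Ioi (0:ℝ), ENNReal.ofReal (G z) ∂μFhat
        = ∫⁻ z in Ioi (0:ℝ), ENNReal.ofReal (1 + a * d) * ENNReal.ofReal (G z) ∂μF := by
    intro G
    rw [← smul_eq_mul, ← lintegral_smul_measure, hdual, lintegral_smul_measure, smul_eq_mul,
      lintegral_const_mul' _ _ ENNReal.ofReal_ne_top]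
  have hloading_ne_top : ∀ G : ℝ → ℝ, (∀ z, 0 < z → G z ≤ z) →
      ENNReal.ofReal (1 + θ) * ∫⁻ z in Ioi (0:ℝ), ENNReal.ofReal (G z) ∂μFhat ≠ ⊤ :=
    fun G hG => (lt_of_le_of_lt (mul_le_mul_right (setLIntegral_mono' measurableSet_Ioi
      fun z hz => ENNReal.ofReal_le_ofReal (hG z hz)) _) hfin).ne
  refine EReal.coe_ennreal_sub_le_sub (hloading_ne_top _ fun z _ => min_le_right d z)
    (hloading_ne_top H fun z hz => le_self_of_mem_Adm hH hz.le) ?_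
  rw [hloading, hloading]
  have hpt : ∀ z ∈ Ioi (0:ℝ),
      ENNReal.ofReal (a / 2 * min d z ^ 2 + min d z)
          + ENNReal.ofReal (1 + a * d) * ENNReal.ofReal (H z)
        ≤ ENNReal.ofReal (a / 2 * H z ^ 2 + H z)
          + ENNReal.ofReal (1 + a * d) * ENNReal.ofReal (min d z) := by
    intro z hz
    have hHz : 0 ≤ H z := hH.2.1 z (le_of_lt hz)
    have hmin : 0 ≤ min d z := le_min hd (le_of_lt hz)
    simp only [← ENNReal.ofReal_mul (by positivity : (0:ℝ) ≤ 1 + a * d)]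
    rw [← ENNReal.ofReal_add (by positivity) (by positivity),
      ← ENNReal.ofReal_add (by positivity) (by positivity)]
    exact ENNReal.ofReal_le_ofReal
      (stopLoss_integrand_le ha (le_self_of_mem_Adm hH (le_of_lt hz)))
  have hmeas : Measurable fun z => ENNReal.ofReal (1 + a * d) * ENNReal.ofReal (min d z) := by
    fun_prop
  calc _ ≤ ∫⁻ z in Ioi (0:ℝ), (ENNReal.ofReal (a / 2 * min d z ^ 2 + min d z)
          + ENNReal.ofReal (1 + a * d) * ENNReal.ofReal (H z)) ∂μF := le_lintegral_add _ _
    _ ≤ ∫⁻ z in Ioi (0:ℝ), (ENNReal.ofReal (a / 2 * H z ^ 2 + H z)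
          + ENNReal.ofReal (1 + a * d) * ENNReal.ofReal (min d z)) ∂μF :=
        setLIntegral_mono' measurableSet_Ioi hpt
    _ = _ := lintegral_add_right' _ hmeas.aemeasurable

theorem Jfun_min_eq_vfun (ha : 0 ≤ a) (hd : 0 ≤ d)
    (hdual : ENNReal.ofReal (1 + θ) • μFhat.restrict (Ioi 0)
      = ENNReal.ofReal (1 + a * d) • μF.restrict (Ioi 0))
    (hfin : ENNReal.ofReal (1 + θ) * (∫⁻ z in Ioi (0:ℝ), ENNReal.ofReal z ∂μFhat) < ⊤) :
    Jfun μF μFhat θ a (fun z => min d z) = vfun μF μFhat θ a :=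
  le_antisymm (le_iInf₂ fun _ hH => Jfun_min_le ha hd hdual hfin hH)
    (iInf₂_le _ (min_mem_Adm hd))

end StopLoss

theorem stmt_12_general
    (F Fhat : StieltjesFunction ℝ) (g : ℝ → ℝ) (θ0 θ : ℝ)
    (hF_neg : ∀ z : ℝ, z < 0 → F z = 0)
    (hF_top : Tendsto (fun z => F z) atTop (nhds 1))
    (hg_pos : 0 < g (1 - F 0))
    (hθ : θ = (1 + θ0) * g (1 - F 0) - 1)
    (hFhat : ∀ z : ℝ, Fhat z = if z < 0 then 0 else 1 - g (1 - F z) / g (1 - F 0))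
    (hfin : ENNReal.ofReal (1 + θ) *
        (∫⁻ z in Set.Ioi (0:ℝ), ENNReal.ofReal z ∂Fhat.measure) < ⊤)
    (astar : ℝ) (hastar_pos : 0 < astar)
    (hg_id : ∀ p ∈ Set.Icc (0:ℝ) 1, g p = p)
    (hθ0_pos : 0 < θ0) :
    ∃ dstar : ℝ, 0 < dstar ∧
      Jfun F.measure Fhat.measure θ astar (fun z => min dstar z) =
        vfun F.measure Fhat.measure θ astar ∧
      astar = θ0 / dstar := by
  have hF_nonneg : ∀ z, 0 ≤ F z := fun z =>
    (hF_neg _ ((min_le_right z (-1)).trans_lt (by norm_num))).symm.le.trans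
      (F.mono (min_le_left z (-1)))
  have hg_tail : ∀ z, g (1 - F z) = 1 - F z := fun z =>
    hg_id _ ⟨sub_nonneg.2 (F.mono.ge_of_tendsto hF_top z), sub_le_self _ (hF_nonneg z)⟩
  have hc : 0 < 1 - F 0 := by rwa [hg_tail] at hg_pos
  have hθc : 1 + θ = (1 + θ0) * (1 - F 0) := by rw [hθ, hg_tail]; ring
  have hFhat_incr : ∀ x y : ℝ, 0 ≤ x → x ≤ y →
      (1 - F 0) * (Fhat y - Fhat x) = F y - F x := by
    intro x y hx hxy
    rw [hFhat, hFhat, if_neg (by linarith), if_neg (by linarith), hg_tail, hg_tail, hg_tail]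
    field_simp
    ring
  have hdual : ENNReal.ofReal (1 + θ) • Fhat.measure.restrict (Ioi 0)
      = ENNReal.ofReal (1 + astar * (θ0 / astar)) • F.measure.restrict (Ioi 0) := by
    rw [mul_div_cancel₀ _ hastar_pos.ne', hθc, ENNReal.ofReal_mul (by linarith), mul_smul,
      StieltjesFunction.smul_measure_restrict_Ioi_eq hc hFhat_incr]
  refine ⟨θ0 / astar, div_pos hθ0_pos hastar_pos, ?_, by field_simp⟩
  exact Jfun_min_eq_vfun hastar_pos.le (div_pos hθ0_pos hastar_pos).le hdual hfin

/-- if g is the identity on [0,1] and θ0 > 0, then under the standing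
assumption the optimal contract is a stop-loss contract, with deductible d* and
a* = θ0 / d*. -/
theorem stmt_12
    (F Fhat : StieltjesFunction ℝ) (g : ℝ → ℝ) (θ0 θ : ℝ)
    (hF_neg : ∀ z : ℝ, z < 0 → F z = 0)
    (hF_top : Tendsto (fun z => F z) atTop (nhds 1))
    (hg_mono : MonotoneOn g (Set.Icc 0 1))
    (hg_left : ∀ p ∈ Set.Ioc (0:ℝ) 1, Tendsto g (nhdsWithin p (Set.Iio p)) (nhds (g p)))
    (hg_zero : g 0 = 0)
    (hg_zero' : Tendsto g (nhdsWithin 0 (Set.Ioi 0)) (nhds 0))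
    (hg_one : g 1 = 1)
    (hg_pos : 0 < g (1 - F 0))
    (hθ0 : -1 < θ0)
    (hθ : θ = (1 + θ0) * g (1 - F 0) - 1)
    (hFhat : ∀ z : ℝ, Fhat z = if z < 0 then 0 else 1 - g (1 - F z) / g (1 - F 0))
    (hFhat_top : Tendsto (fun z => Fhat z) atTop (nhds 1))
    (prem : ℝ) (hprem_pos : 0 < prem)
    (hEZ_pos : 0 < ∫⁻ z in Set.Ioi (0:ℝ), ENNReal.ofReal z ∂F.measure)
    (hEZ_lt : (∫⁻ z in Set.Ioi (0:ℝ), ENNReal.ofReal z ∂F.measure) < ENNReal.ofReal prem)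
    (hprem_lt : ENNReal.ofReal prem <
        ENNReal.ofReal (1 + θ) * ∫⁻ z in Set.Ioi (0:ℝ), ENNReal.ofReal z ∂Fhat.measure)
    (hfin : ENNReal.ofReal (1 + θ) *
        (∫⁻ z in Set.Ioi (0:ℝ), ENNReal.ofReal z ∂Fhat.measure) < ⊤)
    (astar : ℝ) (hastar_pos : 0 < astar)
    (hastar : vfun F.measure Fhat.measure θ astar =
        ((prem - (ENNReal.ofReal (1 + θ) *
          (∫⁻ z in Set.Ioi (0:ℝ), ENNReal.ofReal z ∂Fhat.measure)).toReal : ℝ) : EReal))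
    (hg_id : ∀ p ∈ Set.Icc (0:ℝ) 1, g p = p)
    (hθ0_pos : 0 < θ0) :
    ∃ dstar : ℝ, 0 < dstar ∧
      Jfun F.measure Fhat.measure θ astar (fun z => min dstar z) =
        vfun F.measure Fhat.measure θ astar ∧
      astar = θ0 / dstar :=
  stmt_12_general F Fhat g θ0 θ hF_neg hF_top hg_pos hθ hFhat hfin astar hastar_pos hg_id hθ0_pos
end
end

section
/- Let θ₀ > 0 and π satisfy 0 < (1+θ₀)·E[Z] − π < θ₀·E[Z], where 0 < E[Z] = ∫_{(0,∞)} z dμ_F(z) < ∞. Define ψ(d, z) := (2 − min{1, z/d})·min{d, z} for d > 0 and z ≥ 0. Then there exists d* > 0 such that (θ₀/2)·∫_{(0,∞)} ψ(d*, z) dμ_F(z) = (1+θ₀)·E[Z] − π. -/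
/-!
Write `I(d) = ∫_{(0,∞)} ψ(d, z) dμ_F(z)`. Since `0 ≤ ψ(d, z) ≤ 2z` and `E[Z] < ∞`, dominated
convergence makes `I` continuous on `(0, ∞)`, with `I(d) → 0` as `d → 0⁺` (where `ψ(d, z) = d`
once `d ≤ z`) and `I(d) → 2 E[Z]` as `d → ∞` (where `ψ(d, z) = (2 - z/d) z` once `z ≤ d`).
The target value lies strictly between `0` and `(θ₀/2) · 2 E[Z]`, so the intermediate value
theorem on the connected set `(0, ∞)` produces `d*`.
-/

open MeasureTheory Set Filter Topology
open scoped ENNReal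

noncomputable section

def psi (d z : ℝ) : ℝ := (2 - min 1 (z / d)) * min d z

lemma psi_of_le {d z : ℝ} (hd : 0 < d) (hdz : d ≤ z) : psi d z = d := by
  rw [psi, min_eq_left ((one_le_div hd).2 hdz), min_eq_left hdz]
  ring

lemma psi_of_ge {d z : ℝ} (hd : 0 < d) (hzd : z ≤ d) : psi d z = (2 - z / d) * z := by
  rw [psi, min_eq_right ((div_le_one hd).2 hzd), min_eq_right hzd]

lemma psi_le_two_mul (d : ℝ) {z : ℝ} (hz : 0 ≤ z) : psi d z ≤ 2 * z := by
  rcases le_total d z with hdz | hzd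
  · rcases le_or_gt d 0 with hd | hd
    · have : min 1 (z / d) ≤ 1 := min_le_left _ _
      have : min d z ≤ 0 := (min_le_left _ _).trans hd
      rw [psi]; nlinarith
    · rw [psi_of_le hd hdz]; linarith
  · rcases hz.eq_or_lt with rfl | hz
    · simp [psi, min_eq_right hzd]
    · rw [psi_of_ge (hz.trans_le hzd) hzd]
      nlinarith [div_pos hz (hz.trans_le hzd)]

lemma continuous_psi (d : ℝ) : Continuous (psi d) := by
  unfold psi; fun_prop

lemma continuousAt_psi_of_ne_zero {d : ℝ} (hd : d ≠ 0) (z : ℝ) :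
    ContinuousAt (fun d => psi d z) d :=
  (continuousAt_const.sub (continuousAt_const.min (continuousAt_const.div continuousAt_id hd))).mul
    (continuousAt_id.min continuousAt_const)

lemma tendsto_psi_nhdsGT_zero {z : ℝ} (hz : 0 < z) :
    Tendsto (fun d => psi d z) (𝓝[>] 0) (𝓝 0) := by
  refine tendsto_nhdsWithin_of_tendsto_nhds tendsto_id |>.congr' ?_
  filter_upwards [Ioo_mem_nhdsGT hz] with d hd using (psi_of_le hd.1 hd.2.le).symm

lemma tendsto_psi_atTop (z : ℝ) : Tendsto (fun d => psi d z) atTop (𝓝 (2 * z)) := by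
  have : Tendsto (fun d => (2 - z / d) * z) atTop (𝓝 ((2 - 0) * z)) :=
    (tendsto_const_nhds.sub (tendsto_const_nhds.div_atTop tendsto_id)).mul tendsto_const_nhds
  rw [sub_zero] at this
  refine this.congr' ?_
  filter_upwards [eventually_ge_atTop (max z 1)] with d hd
  exact (psi_of_ge (zero_lt_one.trans_le ((le_max_right _ _).trans hd))
    ((le_max_left _ _).trans hd)).symm

section Integral

variable {μ : Measure ℝ}

def psiIntegral (μ : Measure ℝ) (d : ℝ) : ℝ :=
  (∫⁻ z in Ioi 0, ENNReal.ofReal (psi d z) ∂μ).toReal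

lemma lintegral_ofReal_two_mul (μ : Measure ℝ) :
    ∫⁻ z in Ioi 0, ENNReal.ofReal (2 * z) ∂μ = 2 * ∫⁻ z in Ioi 0, ENNReal.ofReal z ∂μ := by
  rw [← lintegral_const_mul 2 ENNReal.measurable_ofReal]
  simp [ENNReal.ofReal_mul]

lemma tendsto_lintegral_psi (hμ : ∫⁻ z in Ioi 0, ENNReal.ofReal z ∂μ ≠ ∞)
    {l : Filter ℝ} [l.IsCountablyGenerated] {g : ℝ → ℝ}
    (hg : ∀ z > 0, Tendsto (fun d => psi d z) l (𝓝 (g z))) :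
    Tendsto (fun d => ∫⁻ z in Ioi 0, ENNReal.ofReal (psi d z) ∂μ) l
      (𝓝 (∫⁻ z in Ioi 0, ENNReal.ofReal (g z) ∂μ)) := by
  refine tendsto_lintegral_filter_of_dominated_convergence (fun z => ENNReal.ofReal (2 * z))
    (.of_forall fun d => ENNReal.measurable_ofReal.comp (continuous_psi d).measurable)
    (.of_forall fun d => ?_) ?_ ?_
  · filter_upwards [ae_restrict_mem measurableSet_Ioi] with z hz
    exact ENNReal.ofReal_le_ofReal (psi_le_two_mul d (le_of_lt hz))
  · rw [lintegral_ofReal_two_mul]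
    exact ENNReal.mul_ne_top ENNReal.ofNat_ne_top hμ
  · filter_upwards [ae_restrict_mem measurableSet_Ioi] with z hz
    exact (ENNReal.continuous_ofReal.tendsto _).comp (hg z hz)

lemma lintegral_psi_ne_top (hμ : ∫⁻ z in Ioi 0, ENNReal.ofReal z ∂μ ≠ ∞) (d : ℝ) :
    ∫⁻ z in Ioi 0, ENNReal.ofReal (psi d z) ∂μ ≠ ∞ := by
  refine ne_top_of_le_ne_top ?_ (setLIntegral_mono' measurableSet_Ioi fun z hz =>
    ENNReal.ofReal_le_ofReal (psi_le_two_mul d (le_of_lt hz)))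
  rw [lintegral_ofReal_two_mul]
  exact ENNReal.mul_ne_top ENNReal.ofNat_ne_top hμ

lemma continuousOn_psiIntegral (hμ : ∫⁻ z in Ioi 0, ENNReal.ofReal z ∂μ ≠ ∞) :
    ContinuousOn (psiIntegral μ) (Ioi 0) := fun d hd =>
  ContinuousAt.continuousWithinAt <| (ENNReal.tendsto_toReal (lintegral_psi_ne_top hμ d)).comp
    (tendsto_lintegral_psi hμ fun z _ => continuousAt_psi_of_ne_zero (ne_of_gt hd) z)

lemma tendsto_psiIntegral_nhdsGT_zero (hμ : ∫⁻ z in Ioi 0, ENNReal.ofReal z ∂μ ≠ ∞) :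
    Tendsto (psiIntegral μ) (𝓝[>] 0) (𝓝 0) := by
  have := tendsto_lintegral_psi hμ fun z hz => tendsto_psi_nhdsGT_zero hz
  simp only [ENNReal.ofReal_zero, lintegral_zero] at this
  exact (ENNReal.tendsto_toReal ENNReal.zero_ne_top).comp this

lemma tendsto_psiIntegral_atTop (hμ : ∫⁻ z in Ioi 0, ENNReal.ofReal z ∂μ ≠ ∞) :
    Tendsto (psiIntegral μ) atTop (𝓝 (2 * (∫⁻ z in Ioi 0, ENNReal.ofReal z ∂μ).toReal)) := by
  have := tendsto_lintegral_psi hμ fun z _ => tendsto_psi_atTop z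
  rw [lintegral_ofReal_two_mul] at this
  have := (ENNReal.tendsto_toReal (ENNReal.mul_ne_top ENNReal.ofNat_ne_top hμ)).comp this
  rwa [ENNReal.toReal_mul, ENNReal.toReal_ofNat] at this

end Integral

theorem stmt_13_general
    (F : StieltjesFunction ℝ)
    (θ0 prem : ℝ)
    (hEZ_fin : (∫⁻ z in Set.Ioi (0:ℝ), ENNReal.ofReal z ∂F.measure) < ⊤)
    (h_lb : 0 < (1 + θ0) * (∫⁻ z in Set.Ioi (0:ℝ), ENNReal.ofReal z ∂F.measure).toReal - prem)
    (h_ub : (1 + θ0) * (∫⁻ z in Set.Ioi (0:ℝ), ENNReal.ofReal z ∂F.measure).toReal - prem <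
        θ0 * (∫⁻ z in Set.Ioi (0:ℝ), ENNReal.ofReal z ∂F.measure).toReal) :
    ∃ dstar : ℝ, 0 < dstar ∧
      θ0 / 2 * (∫⁻ z in Set.Ioi (0:ℝ),
          ENNReal.ofReal ((2 - min 1 (z / dstar)) * min dstar z) ∂F.measure).toReal =
        (1 + θ0) * (∫⁻ z in Set.Ioi (0:ℝ), ENNReal.ofReal z ∂F.measure).toReal - prem := by
  set E := (∫⁻ z in Ioi (0:ℝ), ENNReal.ofReal z ∂F.measure).toReal
  have hfin := hEZ_fin.ne
  have h_ivt := isPreconnected_Ioi.intermediate_value_Ioo (l₁ := 𝓝[>] 0) (l₂ := atTop)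
    (le_principal_iff.2 self_mem_nhdsWithin) (le_principal_iff.2 (Ioi_mem_atTop 0))
    ((continuousOn_psiIntegral hfin).const_smul (θ0 / 2))
    ((tendsto_psiIntegral_nhdsGT_zero hfin).const_mul (θ0 / 2))
    ((tendsto_psiIntegral_atTop hfin).const_mul (θ0 / 2))
  have hmem : (1 + θ0) * E - prem ∈ Ioo (θ0 / 2 * 0) (θ0 / 2 * (2 * E)) :=
    ⟨by simpa using h_lb, by linarith⟩
  exact h_ivt hmem

/-- existence of a deductible d* > 0 solving
(θ0/2)·∫ ψ(d*,z) dμ_F = (1+θ0)·E[Z] − π, where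
ψ(d,z) = (2 − min{1, z/d})·min{d,z}. -/
theorem stmt_13
    (F : StieltjesFunction ℝ)
    (hF_neg : ∀ z : ℝ, z < 0 → F z = 0)
    (hF_top : Tendsto (fun z => F z) atTop (nhds 1))
    (θ0 prem : ℝ) (hθ0_pos : 0 < θ0)
    (hEZ_pos : 0 < ∫⁻ z in Set.Ioi (0:ℝ), ENNReal.ofReal z ∂F.measure)
    (hEZ_fin : (∫⁻ z in Set.Ioi (0:ℝ), ENNReal.ofReal z ∂F.measure) < ⊤)
    (h_lb : 0 < (1 + θ0) * (∫⁻ z in Set.Ioi (0:ℝ), ENNReal.ofReal z ∂F.measure).toReal - prem)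
    (h_ub : (1 + θ0) * (∫⁻ z in Set.Ioi (0:ℝ), ENNReal.ofReal z ∂F.measure).toReal - prem <
        θ0 * (∫⁻ z in Set.Ioi (0:ℝ), ENNReal.ofReal z ∂F.measure).toReal) :
    ∃ dstar : ℝ, 0 < dstar ∧
      θ0 / 2 * (∫⁻ z in Set.Ioi (0:ℝ),
          ENNReal.ofReal ((2 - min 1 (z / dstar)) * min dstar z) ∂F.measure).toReal =
        (1 + θ0) * (∫⁻ z in Set.Ioi (0:ℝ), ENNReal.ofReal z ∂F.measure).toReal - prem :=
  stmt_13_general F θ0 prem hEZ_fin h_lb h_ub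
end
end
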